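/- arXiv:1211.6483 — 3 statements merged into one kernel-verified Lean document; each statement's English description precedes it below -/
import Mathlib

section
/- For every face sequence S, the set F(S) is an exposed face of the hypersimplex J(n,k): there exists a linear functional f on ℝⁿ such that F(S) = {x ∈ J(n,k) : f(y) ≤ f(x) for all y ∈ J(n,k)}. -/
set_option linter.unusedVariables false

/-- The alphabet `{0, 1, ∗}` for face sequences. -/
inductive Letter : Type
  | zero
  | one
  | star
  deriving DecidableEq

/-- A sequence of length `n` over the alphabet `{0, 1, ∗}`. -/
abbrev FSeq (n : ℕ) := Fin n → Letter

/-- `S(1)`, the number of `1`'s in `S`. -/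
def count1 {n : ℕ} (S : FSeq n) : ℕ := (Finset.univ.filter fun i => S i = Letter.one).card

/-- The number of `∗`'s in `S`. -/
def countStar {n : ℕ} (S : FSeq n) : ℕ := (Finset.univ.filter fun i => S i = Letter.star).card

/-- A face sequence: either no `∗` and exactly `k` ones, or at most `k-1` ones and
(#ones) + (#stars) ≥ `k+1`. -/
def FaceSeq {n : ℕ} (k : ℕ) (S : FSeq n) : Prop :=
  (countStar S = 0 ∧ count1 S = k) ∨ (count1 S + 1 ≤ k ∧ k + 1 ≤ count1 S + countStar S)

/-- The hypersimplex `J(n,k)`: the convex hull of the 0/1-vectors in `ℝⁿ` summing to `k`. -/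
def hypersimplex (n k : ℕ) : Set (Fin n → ℝ) :=
  convexHull ℝ {x : Fin n → ℝ | (∀ i, x i = 0 ∨ x i = 1) ∧ ∑ i, x i = (k : ℝ)}

/-- `F(S)`: the convex hull of the vertices of `J(n,k)` compatible with `S`. -/
def FaceOf (n k : ℕ) (S : FSeq n) : Set (Fin n → ℝ) :=
  convexHull ℝ {x : Fin n → ℝ | ((∀ i, x i = 0 ∨ x i = 1) ∧ ∑ i, x i = (k : ℝ)) ∧
    (∀ i, S i = Letter.zero → x i = 0) ∧ (∀ i, S i = Letter.one → x i = 1)}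

/-!
The functional `x ↦ ∑ᵢ wᵢ xᵢ` with weight `1` on the ones of `S`, `-1` on its zeros and `0` on
its stars is at most `#ones(S)` on every vertex of `J(n,k)`, with equality exactly on the vertices
compatible with `S`. The face condition on `S` guarantees that such a vertex exists, so the maximum
of the functional over `J(n,k)` is `#ones(S)`, and the set where a linear functional attains its
maximum over a convex hull is the convex hull of the maximizing generators.
-/

open Finset

section ConvexHull

variable {𝕜 E : Type*} [Field 𝕜] [LinearOrder 𝕜] [IsStrictOrderedRing 𝕜]
  [AddCommGroup E] [Module 𝕜 E] {s : Set E} (l : E →ₗ[𝕜] 𝕜) {m : 𝕜}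

theorem convexHull_inter_hyperplane_of_le (hle : ∀ y ∈ s, l y ≤ m) :
    convexHull 𝕜 s ∩ {x | l x = m} = convexHull 𝕜 {y ∈ s | l y = m} := by
  classical
  refine subset_antisymm ?_ <| convexHull_min (fun y hy => ⟨subset_convexHull 𝕜 s hy.1, hy.2⟩)
    ((convex_convexHull 𝕜 s).inter (convex_hyperplane l.isLinear m))
  rintro x ⟨hx, hlx⟩
  rw [_root_.convexHull_eq] at hx
  obtain ⟨ι, t, w, z, hw₀, hw₁, hz, rfl⟩ := hx
  have hsum : ∑ i ∈ t, w i * l (z i) = ∑ i ∈ t, w i * m := by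
    rw [← sum_mul, hw₁, one_mul, ← hlx, centerMass_eq_of_sum_1 _ _ hw₁, map_sum]
    simp only [map_smul, smul_eq_mul]
  -- Each term `w i * l (z i)` is at most `w i * m`, so equality of the sums is termwise.
  have hmax : ∀ i ∈ t, w i ≠ 0 → l (z i) = m := fun i hi hwi =>
    mul_left_cancel₀ hwi <| (sum_eq_sum_iff_of_le fun j hj =>
      mul_le_mul_of_nonneg_left (hle _ (hz j hj)) (hw₀ j hj)).1 hsum i hi
  rw [← centerMass_filter_ne_zero]
  refine centerMass_mem_convexHull _ (fun i hi => hw₀ i (mem_filter.1 hi).1) ?_ fun i hi => ?_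
  · rw [sum_filter_ne_zero, hw₁]
    exact one_pos
  · obtain ⟨hit, hwi⟩ := mem_filter.1 hi
    exact ⟨hz i hit, hmax i hit hwi⟩

theorem sep_forall_le_convexHull_eq_convexHull (hle : ∀ y ∈ s, l y ≤ m)
    {v : E} (hvs : v ∈ s) (hlv : l v = m) :
    {x ∈ convexHull 𝕜 s | ∀ y ∈ convexHull 𝕜 s, l y ≤ l x} = convexHull 𝕜 {y ∈ s | l y = m} := by
  have hle' : ∀ y ∈ convexHull 𝕜 s, l y ≤ m :=
    convexHull_min hle (convex_halfSpace_le l.isLinear m)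
  rw [← convexHull_inter_hyperplane_of_le l hle]
  ext x
  refine and_congr_right fun hx => ⟨fun h => (hle' x hx).antisymm ?_, fun h y hy => h ▸ hle' y hy⟩
  exact hlv ▸ h v (subset_convexHull 𝕜 s hvs)

end ConvexHull

def hypersimplexVertices (n k : ℕ) : Set (Fin n → ℝ) :=
  {x | (∀ i, x i = 0 ∨ x i = 1) ∧ ∑ i, x i = (k : ℝ)}

def Compatible {n : ℕ} (S : FSeq n) (x : Fin n → ℝ) : Prop :=
  (∀ i, S i = Letter.zero → x i = 0) ∧ (∀ i, S i = Letter.one → x i = 1)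

def Letter.weight : Letter → ℝ
  | .zero => -1
  | .one => 1
  | .star => 0

namespace Letter

variable (a : Letter) {b : ℝ}

theorem weight_mul_le (hb : b = 0 ∨ b = 1) : a.weight * b ≤ if a = .one then 1 else 0 := by
  rcases hb with rfl | rfl <;> cases a <;> simp [weight]

theorem weight_mul_eq_iff (hb : b = 0 ∨ b = 1) :
    a.weight * b = (if a = .one then 1 else 0) ↔ (a = .zero → b = 0) ∧ (a = .one → b = 1) := by
  rcases hb with rfl | rfl <;> cases a <;> simp [weight]

end Letter

theorem FaceSeq.count1_le_and_le_add {n k : ℕ} {S : FSeq n} (hS : FaceSeq k S) :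
    count1 S ≤ k ∧ k ≤ count1 S + countStar S := by
  rcases hS with ⟨_, _⟩ | ⟨_, _⟩ <;> omega

theorem cast_count1_eq_sum {n : ℕ} (S : FSeq n) :
    (count1 S : ℝ) = ∑ i, if S i = Letter.one then 1 else 0 := by
  rw [sum_boole, count1]

theorem exists_mem_hypersimplexVertices_compatible {n k : ℕ} (S : FSeq n)
    (h₁ : count1 S ≤ k) (h₂ : k ≤ count1 S + countStar S) :
    ∃ x ∈ hypersimplexVertices n k, Compatible S x := by
  classical
  set ones := univ.filter fun i => S i = Letter.one
  set stars := univ.filter fun i => S i = Letter.star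
  obtain ⟨T, hT, hTcard⟩ := exists_subset_card_eq (s := stars) (n := k - count1 S)
    (by change _ ≤ countStar S; omega)
  have hdisj : Disjoint ones T := disjoint_left.2 fun i hi hiT => by
    simpa [(mem_filter.1 hi).2, stars] using hT hiT
  refine ⟨fun i => if i ∈ ones ∪ T then 1 else 0, ⟨fun i => ?_, ?_⟩, fun i hi => ?_, fun i hi => ?_⟩
  · dsimp only
    split_ifs <;> simp
  · rw [sum_boole, filter_mem_eq_inter, univ_inter, card_union_of_disjoint hdisj, hTcard,
      ← count1]
    push_cast [h₁]
    ring
  · have hT' : i ∉ T := fun h => by simpa [stars, hi] using hT h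
    simp [ones, hi, hT']
  · simp [ones, hi]

def faceFunctional {n : ℕ} (S : FSeq n) : (Fin n → ℝ) →ₗ[ℝ] ℝ :=
  ∑ i, (S i).weight • LinearMap.proj i

section FaceFunctional

variable {n : ℕ} (S : FSeq n) {x : Fin n → ℝ}

theorem faceFunctional_apply (x : Fin n → ℝ) : faceFunctional S x = ∑ i, (S i).weight * x i := by
  simp [faceFunctional]

theorem faceFunctional_le (hx : ∀ i, x i = 0 ∨ x i = 1) : faceFunctional S x ≤ count1 S := by
  rw [faceFunctional_apply, cast_count1_eq_sum]
  exact sum_le_sum fun i _ => (S i).weight_mul_le (hx i)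

theorem faceFunctional_eq_count1_iff (hx : ∀ i, x i = 0 ∨ x i = 1) :
    faceFunctional S x = count1 S ↔ Compatible S x := by
  rw [faceFunctional_apply, cast_count1_eq_sum,
    sum_eq_sum_iff_of_le fun i _ => (S i).weight_mul_le (hx i), Compatible, ← forall_and]
  exact forall_congr' fun i => by simpa using (S i).weight_mul_eq_iff (hx i)

end FaceFunctional

theorem faceOf_is_exposed_general (n k : ℕ) (S : FSeq n) (hS : FaceSeq k S) :
    ∃ f : (Fin n → ℝ) →ₗ[ℝ] ℝ,
      FaceOf n k S = {x ∈ hypersimplex n k | ∀ y ∈ hypersimplex n k, f y ≤ f x} := by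
  obtain ⟨h₁, h₂⟩ := hS.count1_le_and_le_add
  obtain ⟨v, hv, hvS⟩ := exists_mem_hypersimplexVertices_compatible S h₁ h₂
  have hcompat : {x ∈ hypersimplexVertices n k | Compatible S x} =
      {x ∈ hypersimplexVertices n k | faceFunctional S x = count1 S} :=
    Set.sep_ext_iff.2 fun x hx => (faceFunctional_eq_count1_iff S hx.1).symm
  refine ⟨faceFunctional S, ?_⟩
  change convexHull ℝ {x ∈ hypersimplexVertices n k | Compatible S x} = _
  rw [hcompat, hypersimplex, ← sep_forall_le_convexHull_eq_convexHull (faceFunctional S)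
    (fun y hy => faceFunctional_le S hy.1) hv ((faceFunctional_eq_count1_iff S hv.1).2 hvS)]
  rfl

/-- For every face sequence `S`, the set `F(S)` is an exposed face of the
hypersimplex `J(n,k)`: there is a linear functional `f` on `ℝⁿ` such that
`F(S) = {x ∈ J(n,k) | ∀ y ∈ J(n,k), f y ≤ f x}`. -/
theorem faceOf_is_exposed (n k : ℕ) (hk1 : 1 ≤ k) (hk2 : k ≤ n - 1)
    (S : FSeq n) (hS : FaceSeq k S) :
    ∃ f : (Fin n → ℝ) →ₗ[ℝ] ℝ,
      FaceOf n k S = {x ∈ hypersimplex n k | ∀ y ∈ hypersimplex n k, f y ≤ f x} :=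
  faceOf_is_exposed_general n k S hS
end

section
/- For any m₀ and m₁ with 0 ≤ m₀ ≤ n−k−1 and 1 ≤ m₁ ≤ k−1, every face sequence S other than v₀ is of type i for exactly one i with 1 ≤ i ≤ 10; that is, the ten rules partition the set of face sequences other than v₀ into the subsets of face sequences of type i, 1 ≤ i ≤ 10. -/
set_option linter.unusedVariables false

/-- `S(0)`, the number of `0`'s in `S`. -/
def count0 {n : ℕ} (S : FSeq n) : ℕ := (Finset.univ.filter fun i => S i = Letter.zero).card

/-- `v₀`, the sequence of `k` ones followed by `n - k` zeros. -/
def v0seq (n k : ℕ) : FSeq n := fun i => if (i : ℕ) < k then Letter.one else Letter.zero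

/-- `S` contains at least one `∗`. -/
def hasStar {n : ℕ} (S : FSeq n) : Prop := ∃ i, S i = Letter.star

/-- There is a `1` to the right of the rightmost `∗` (in particular `S` contains a `∗`). -/
def OneRight {n : ℕ} (S : FSeq n) : Prop :=
  hasStar S ∧ ∃ i, S i = Letter.one ∧ ∀ j, i < j → S j ≠ Letter.star

/-- There is no `1` to the right of the rightmost `∗` (and `S` contains a `∗`). -/
def NoOneRight {n : ℕ} (S : FSeq n) : Prop :=
  hasStar S ∧ ∀ i, S i = Letter.one → ∃ j, i < j ∧ S j = Letter.star

/-- There is a `0` to the left of the leftmost `∗` (in particular `S` contains a `∗`). -/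
def ZeroLeft {n : ℕ} (S : FSeq n) : Prop :=
  hasStar S ∧ ∃ i, S i = Letter.zero ∧ ∀ j, j < i → S j ≠ Letter.star

/-- There is no `0` to the left of the leftmost `∗` (and `S` contains a `∗`). -/
def NoZeroLeft {n : ℕ} (S : FSeq n) : Prop :=
  hasStar S ∧ ∀ i, S i = Letter.zero → ∃ j, j < i ∧ S j = Letter.star

/-- `i` is the position of the rightmost `1` of `S`. -/
def IsRightmostOne {n : ℕ} (S : FSeq n) (i : Fin n) : Prop :=
  S i = Letter.one ∧ ∀ j, i < j → S j ≠ Letter.one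

/-- `i` is the position of the rightmost `∗` of `S`. -/
def IsRightmostStar {n : ℕ} (S : FSeq n) (i : Fin n) : Prop :=
  S i = Letter.star ∧ ∀ j, i < j → S j ≠ Letter.star

/-- `i` is the position of the leftmost `0` of `S`. -/
def IsLeftmostZero {n : ℕ} (S : FSeq n) (i : Fin n) : Prop :=
  S i = Letter.zero ∧ ∀ j, j < i → S j ≠ Letter.zero

/-- `i` is the position of the leftmost `∗` of `S`. -/
def IsLeftmostStar {n : ℕ} (S : FSeq n) (i : Fin n) : Prop :=
  S i = Letter.star ∧ ∀ j, j < i → S j ≠ Letter.star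

/-- Condition of rule (1), subcondition (a). -/
def Cond1a {n : ℕ} (k m0 m1 : ℕ) (S : FSeq n) : Prop :=
  count1 S + 1 ≤ k ∧ OneRight S ∧ count1 S ≠ m1

/-- Condition of rule (1), subcondition (b). -/
def Cond1b {n : ℕ} (k m0 m1 : ℕ) (S : FSeq n) : Prop :=
  count1 S + 1 ≤ k ∧ OneRight S ∧ count1 S = m1 ∧ m0 < count0 S

/-- Condition of rule (1), subcondition (c): no `0` to the left of the leftmost `∗`. -/
def Cond1c {n : ℕ} (k m0 m1 : ℕ) (S : FSeq n) : Prop :=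
  count1 S + 1 ≤ k ∧ OneRight S ∧ count1 S = m1 ∧ count0 S = m0 ∧ NoZeroLeft S

/-- Condition of rule (2), subcondition (a): here `count1 S + 1 ≠ m1` encodes `S(1) ≠ m₁ - 1`. -/
def Cond2a {n : ℕ} (k m0 m1 : ℕ) (S : FSeq n) : Prop :=
  count1 S + 2 ≤ k ∧ NoOneRight S ∧ count1 S + 1 ≠ m1

/-- Condition of rule (2), subcondition (b). -/
def Cond2b {n : ℕ} (k m0 m1 : ℕ) (S : FSeq n) : Prop :=
  count1 S + 2 ≤ k ∧ NoOneRight S ∧ count1 S + 1 = m1 ∧ m0 < count0 S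

/-- Condition of rule (2), subcondition (c). -/
def Cond2c {n : ℕ} (k m0 m1 : ℕ) (S : FSeq n) : Prop :=
  count1 S + 2 ≤ k ∧ NoOneRight S ∧ count1 S + 1 = m1 ∧ count0 S = m0 ∧ NoZeroLeft S

/-- `S` is of type 1 (satisfies the condition of rule (1)). -/
def Type1 {n : ℕ} (k m0 m1 : ℕ) (S : FSeq n) : Prop :=
  Cond1a k m0 m1 S ∨ Cond1b k m0 m1 S ∨ Cond1c k m0 m1 S

/-- `S` is of type 2 (satisfies the condition of rule (2)). -/
def Type2 {n : ℕ} (k m0 m1 : ℕ) (S : FSeq n) : Prop :=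
  Cond2a k m0 m1 S ∨ Cond2b k m0 m1 S ∨ Cond2c k m0 m1 S

/-- `S` is of type 3: `S(1) = k-1`, `S(0) ≤ n-k-1`, no `1` right of the rightmost `∗`,
a `0` left of the leftmost `∗`. -/
def Type3 {n : ℕ} (k : ℕ) (S : FSeq n) : Prop :=
  count1 S + 1 = k ∧ count0 S + k + 1 ≤ n ∧ NoOneRight S ∧ ZeroLeft S

/-- `S` is of type 4: `S(1) = k-1`, `S(0) ≤ n-k-2`, no `1` right of the rightmost `∗`,
no `0` left of the leftmost `∗`. -/
def Type4 {n : ℕ} (k : ℕ) (S : FSeq n) : Prop :=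
  count1 S + 1 = k ∧ count0 S + k + 2 ≤ n ∧ NoOneRight S ∧ NoZeroLeft S

/-- `S` is of type 5: `S(1) = m₁`, `S(0) ≤ m₀`, a `1` right of the rightmost `∗`,
a `0` left of the leftmost `∗`. -/
def Type5 {n : ℕ} (m0 m1 : ℕ) (S : FSeq n) : Prop :=
  count1 S = m1 ∧ count0 S ≤ m0 ∧ OneRight S ∧ ZeroLeft S

/-- `S` is of type 6: `S(1) = m₁`, `S(0) < m₀`, a `1` right of the rightmost `∗`,
no `0` left of the leftmost `∗`. -/
def Type6 {n : ℕ} (m0 m1 : ℕ) (S : FSeq n) : Prop :=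
  count1 S = m1 ∧ count0 S < m0 ∧ OneRight S ∧ NoZeroLeft S

/-- `S` is of type 7: `S(1) = m₁-1`, `S(0) ≤ m₀`, no `1` right of the rightmost `∗`,
a `0` left of the leftmost `∗`. -/
def Type7 {n : ℕ} (m0 m1 : ℕ) (S : FSeq n) : Prop :=
  count1 S + 1 = m1 ∧ count0 S ≤ m0 ∧ NoOneRight S ∧ ZeroLeft S

/-- `S` is of type 8: `S(1) = m₁-1`, `S(0) < m₀`, no `1` right of the rightmost `∗`,
no `0` left of the leftmost `∗`. -/
def Type8 {n : ℕ} (m0 m1 : ℕ) (S : FSeq n) : Prop :=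
  count1 S + 1 = m1 ∧ count0 S < m0 ∧ NoOneRight S ∧ NoZeroLeft S

/-- `S` is of type 9: `S(1) = k`, `S(0) = n-k`, and `S ≠ v₀`. -/
def Type9 {n : ℕ} (k : ℕ) (S : FSeq n) : Prop :=
  count1 S = k ∧ count0 S + k = n ∧ S ≠ v0seq n k

/-- `S` is of type 10: `S(1) = k-1`, `S(0) = n-k-1`, no `1` right of the rightmost `∗`,
no `0` left of the leftmost `∗`. -/
def Type10 {n : ℕ} (k : ℕ) (S : FSeq n) : Prop :=
  count1 S + 1 = k ∧ count0 S + k + 1 = n ∧ NoOneRight S ∧ NoZeroLeft S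

/-- `S` is of type `i` for `1 ≤ i ≤ 10` (and of no type otherwise). -/
def OfType {n : ℕ} (k m0 m1 : ℕ) (i : ℕ) (S : FSeq n) : Prop :=
  match i with
  | 1 => Type1 k m0 m1 S
  | 2 => Type2 k m0 m1 S
  | 3 => Type3 k S
  | 4 => Type4 k S
  | 5 => Type5 m0 m1 S
  | 6 => Type6 m0 m1 S
  | 7 => Type7 m0 m1 S
  | 8 => Type8 m0 m1 S
  | 9 => Type9 k S
  | 10 => Type10 k S
  | _ => False

/-- The replacement of rule (1): replace the rightmost `1` with `∗`. -/
def Apply1 {n : ℕ} (S S' : FSeq n) : Prop :=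
  ∃ i, IsRightmostOne S i ∧ S' = Function.update S i Letter.star

/-- The replacement of rule (2): replace the rightmost `∗` with `1`. -/
def Apply2 {n : ℕ} (S S' : FSeq n) : Prop :=
  ∃ i, IsRightmostStar S i ∧ S' = Function.update S i Letter.one

/-- The replacement of rules (3), (5) and (7): replace the leftmost `0` with `∗`. -/
def Apply3 {n : ℕ} (S S' : FSeq n) : Prop :=
  ∃ i, IsLeftmostZero S i ∧ S' = Function.update S i Letter.star

/-- The replacement of rules (4), (6) and (8): replace the leftmost `∗` with `0`. -/
def Apply4 {n : ℕ} (S S' : FSeq n) : Prop :=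
  ∃ i, IsLeftmostStar S i ∧ S' = Function.update S i Letter.zero

/-- The replacement of rule (9): replace the leftmost `0` and the rightmost `1` each with `∗`. -/
def Apply9 {n : ℕ} (S S' : FSeq n) : Prop :=
  ∃ i j, IsLeftmostZero S i ∧ IsRightmostOne S j ∧
    S' = Function.update (Function.update S i Letter.star) j Letter.star

/-- The replacement of rule (10): replace the leftmost `∗` with `0` and the other `∗` with `1`. -/
def Apply10 {n : ℕ} (S S' : FSeq n) : Prop :=
  ∃ i j, IsLeftmostStar S i ∧ IsRightmostStar S j ∧ i ≠ j ∧
    S' = Function.update (Function.update S i Letter.zero) j Letter.one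

/-- The matching `V` on face sequences: a face sequence `S` of type 1, 3, 5, 7 or 9 is
matched with the result `S'` of applying the corresponding rule to it. -/
def Vmatch {n : ℕ} (k m0 m1 : ℕ) (S S' : FSeq n) : Prop :=
  FaceSeq k S ∧
    ((Type1 k m0 m1 S ∧ Apply1 S S') ∨
     (Type3 k S ∧ Apply3 S S') ∨
     (Type5 m0 m1 S ∧ Apply3 S S') ∨
     (Type7 m0 m1 S ∧ Apply3 S S') ∨
     (Type9 k S ∧ Apply9 S S'))

/-- The vertex set of a face sequence `S`: the vertex sequences (0/1-sequences with
exactly `k` ones) agreeing with `S` wherever `S` is not `∗`. -/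
def VertexSet {n : ℕ} (k : ℕ) (S : FSeq n) : Set (FSeq n) :=
  {v | (∀ i, v i ≠ Letter.star) ∧ count1 v = k ∧ ∀ i, S i ≠ Letter.star → v i = S i}

/-- The dimension of the face `F(S)`. -/
def fdim {n : ℕ} (S : FSeq n) : ℕ :=
  if countStar S = 0 then 0 else countStar S - 1

/-- `T` is a codimension-1 face of `S`. -/
def Codim1 {n : ℕ} (k : ℕ) (T S : FSeq n) : Prop :=
  VertexSet k T ⊂ VertexSet k S ∧ fdim T + 1 = fdim S

/-- A (nontrivial) `V`-path `a₀, b₀, a₁, b₁, …, b_r, a_{r+1}` of face sequences. -/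
structure VPath (n k m0 m1 r : ℕ) where
  a : Fin (r + 2) → FSeq n
  b : Fin (r + 1) → FSeq n
  face_a : ∀ i, FaceSeq k (a i)
  face_b : ∀ i, FaceSeq k (b i)
  mem : ∀ i : Fin (r + 1), Vmatch k m0 m1 (a i.castSucc) (b i)
  codim_left : ∀ i : Fin (r + 1), Codim1 k (a i.castSucc) (b i)
  codim_right : ∀ i : Fin (r + 1), Codim1 k (a i.succ) (b i)
  step_ne : ∀ i : Fin (r + 1), a i.castSucc ≠ a i.succ

/-!
A face sequence without `∗` has exactly `k` ones and `n - k` zeros, and every rule except (9)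
needs a `∗`, so only rule (9) applies. Once `S` has a `∗`, "no `1` right of the rightmost `∗`"
and "no `0` left of the leftmost `∗`" are the negations of their positive counterparts, so the
type of `S` is decided by the two counts `S(0)`, `S(1)` and two truth values, and the ten
conditions become a case split on these that is exhaustive and pairwise exclusive by linear
arithmetic; types 7, 8 are told apart from 3, 4, 10 because `m₁ - 1 < k - 1`.
-/

section FaceSequence

variable {n k m0 m1 : ℕ} {S : FSeq n}

theorem count0_add_count1_add_countStar (S : FSeq n) :
    count0 S + count1 S + countStar S = n := by
  simp only [count0, count1, countStar, Finset.card_filter, ← Finset.sum_add_distrib]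
  calc _ = ∑ _ : Fin n, 1 := Finset.sum_congr rfl fun i _ => by cases S i <;> rfl
    _ = n := by simp

theorem hasStar_iff_countStar_ne_zero : hasStar S ↔ countStar S ≠ 0 := by
  simp [hasStar, countStar]

theorem noOneRight_iff_not_oneRight (hS : hasStar S) : NoOneRight S ↔ ¬ OneRight S := by
  simp only [NoOneRight, OneRight, hS, true_and, not_exists, not_and, not_forall, not_not,
    exists_prop]

theorem noZeroLeft_iff_not_zeroLeft (hS : hasStar S) : NoZeroLeft S ↔ ¬ ZeroLeft S := by
  simp only [NoZeroLeft, ZeroLeft, hS, true_and, not_exists, not_and, not_forall, not_not,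
    exists_prop]

theorem ofType_bounds {i : ℕ} (h : OfType k m0 m1 i S) : 1 ≤ i ∧ i ≤ 10 := by
  unfold OfType at h
  split at h <;> first | omega | exact h.elim

theorem hasStar_of_ofType {i : ℕ} (hi : i ≠ 9) (h : OfType k m0 m1 i S) : hasStar S := by
  unfold OfType at h
  split at h <;> (try simp only [Type1, Type2, Type3, Type4, Type5, Type6, Type7, Type8, Type10,
    Cond1a, Cond1b, Cond1c, Cond2a, Cond2b, Cond2c, OneRight, NoOneRight] at h) <;> tauto

theorem ofType_unique_of_hasStar (hm1 : m1 + 1 ≤ k) (hS : hasStar S) (h1 : count1 S + 1 ≤ k)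
    {i j : ℕ} (hi : OfType k m0 m1 i S) (hj : OfType k m0 m1 j S) : i = j := by
  obtain ⟨hi1, hi10⟩ := ofType_bounds hi
  obtain ⟨hj1, hj10⟩ := ofType_bounds hj
  interval_cases i <;> interval_cases j <;> first
    | rfl
    | simp only [OfType, Type1, Type2, Type3, Type4, Type5, Type6, Type7, Type8, Type9, Type10,
        Cond1a, Cond1b, Cond1c, Cond2a, Cond2b, Cond2c, noOneRight_iff_not_oneRight hS,
        noZeroLeft_iff_not_zeroLeft hS] at hi hj
      by_cases ho : OneRight S <;> by_cases hz : ZeroLeft S <;>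
        simp only [ho, hz, not_true_eq_false, not_false_eq_true, and_true, and_false, true_and,
          false_and, or_false] at hi hj <;> omega

theorem exists_ofType_of_oneRight (ho : OneRight S) (h1 : count1 S + 1 ≤ k) :
    ∃ i, OfType k m0 m1 i S := by
  have hNZ := noZeroLeft_iff_not_zeroLeft ho.1
  by_cases hz : ZeroLeft S
  · by_cases h5 : count1 S = m1 ∧ count0 S ≤ m0
    · exact ⟨5, h5.1, h5.2, ho, hz⟩
    · by_cases hm : count1 S = m1
      · exact ⟨1, .inr (.inl ⟨h1, ho, hm, by omega⟩)⟩
      · exact ⟨1, .inl ⟨h1, ho, hm⟩⟩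
  · by_cases h6 : count1 S = m1 ∧ count0 S < m0
    · exact ⟨6, h6.1, h6.2, ho, hNZ.2 hz⟩
    · by_cases hm : count1 S = m1
      · by_cases hc : count0 S = m0
        · exact ⟨1, .inr (.inr ⟨h1, ho, hm, hc, hNZ.2 hz⟩)⟩
        · exact ⟨1, .inr (.inl ⟨h1, ho, hm, by omega⟩)⟩
      · exact ⟨1, .inl ⟨h1, ho, hm⟩⟩

theorem exists_ofType_of_noOneRight (ho : NoOneRight S) (h1 : count1 S + 1 ≤ k)
    (h0 : count0 S + k + 1 ≤ n) : ∃ i, OfType k m0 m1 i S := by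
  have hNZ := noZeroLeft_iff_not_zeroLeft ho.1
  by_cases hk : count1 S + 1 = k
  · by_cases hz : ZeroLeft S
    · exact ⟨3, hk, h0, ho, hz⟩
    · by_cases hn : count0 S + k + 1 = n
      · exact ⟨10, hk, hn, ho, hNZ.2 hz⟩
      · exact ⟨4, hk, by omega, ho, hNZ.2 hz⟩
  have hk2 : count1 S + 2 ≤ k := by omega
  by_cases hz : ZeroLeft S
  · by_cases h7 : count1 S + 1 = m1 ∧ count0 S ≤ m0
    · exact ⟨7, h7.1, h7.2, ho, hz⟩
    · by_cases hm : count1 S + 1 = m1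
      · exact ⟨2, .inr (.inl ⟨hk2, ho, hm, by omega⟩)⟩
      · exact ⟨2, .inl ⟨hk2, ho, hm⟩⟩
  · by_cases h8 : count1 S + 1 = m1 ∧ count0 S < m0
    · exact ⟨8, h8.1, h8.2, ho, hNZ.2 hz⟩
    · by_cases hm : count1 S + 1 = m1
      · by_cases hc : count0 S = m0
        · exact ⟨2, .inr (.inr ⟨hk2, ho, hm, hc, hNZ.2 hz⟩)⟩
        · exact ⟨2, .inr (.inl ⟨hk2, ho, hm, by omega⟩)⟩
      · exact ⟨2, .inl ⟨hk2, ho, hm⟩⟩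

theorem exists_ofType_of_hasStar (hS : hasStar S) (h1 : count1 S + 1 ≤ k)
    (h0 : count0 S + k + 1 ≤ n) : ∃ i, OfType k m0 m1 i S := by
  by_cases ho : OneRight S
  · exact exists_ofType_of_oneRight ho h1
  · exact exists_ofType_of_noOneRight ((noOneRight_iff_not_oneRight hS).2 ho) h1 h0

end FaceSequence

theorem rules_partition_general (n k m0 m1 : ℕ) (hm1u : m1 + 1 ≤ k)
    (S : FSeq n) (hS : FaceSeq k S) (hSne : S ≠ v0seq n k) :
    ∃! i : ℕ, 1 ≤ i ∧ i ≤ 10 ∧ OfType k m0 m1 i S := by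
  refine (existsUnique_congr fun i =>
    (⟨fun hi => ⟨(ofType_bounds hi).1, (ofType_bounds hi).2, hi⟩, fun hi => hi.2.2⟩ :
      OfType k m0 m1 i S ↔ _)).1 ?_
  have hcount := count0_add_count1_add_countStar S
  rcases hS with ⟨hnoStar, h1⟩ | ⟨h1, hk⟩
  · refine ⟨9, ⟨h1, by omega, hSne⟩, fun i hi => ?_⟩
    by_contra hi9
    exact hasStar_iff_countStar_ne_zero.1 (hasStar_of_ofType hi9 hi) hnoStar
  · have hstar : hasStar S := hasStar_iff_countStar_ne_zero.2 (by omega)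
    obtain ⟨i, hi⟩ := exists_ofType_of_hasStar (m0 := m0) (m1 := m1) hstar h1 (by omega)
    exact ⟨i, hi, fun j hj => ofType_unique_of_hasStar hm1u hstar h1 hj hi⟩

/-- For any admissible `m₀, m₁`, every face sequence other than `v₀`
is of type `i` for exactly one `i` with `1 ≤ i ≤ 10`. -/
theorem rules_partition (n k m0 m1 : ℕ) (hk1 : 1 ≤ k) (hk2 : k ≤ n - 1)
    (hm0 : m0 + k + 1 ≤ n) (hm1l : 1 ≤ m1) (hm1u : m1 + 1 ≤ k)
    (S : FSeq n) (hS : FaceSeq k S) (hSne : S ≠ v0seq n k) :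
    ∃! i : ℕ, 1 ≤ i ∧ i ≤ 10 ∧ OfType k m0 m1 i S :=
  rules_partition_general n k m0 m1 hm1u S hS hSne
end

section
/- Rules (1)(a) and (2)(a) are inverses: if S is a face sequence satisfying subcondition (a) of rule (1) and S′ is the result of applying rule (1) to S, then S′ is a face sequence satisfying subcondition (a) of rule (2) and applying rule (2) to S′ returns S; conversely, if T is a face sequence satisfying subcondition (a) of rule (2) and T′ is the result of applying rule (2) to T, then T′ satisfies subcondition (a) of rule (1) and applying rule (1) to T′ returns T. -/
set_option linter.unusedVariables false

/-!
Turning the rightmost `1` of `S` into `∗` makes it the rightmost `∗` of `S'`: every `∗` of `S` lies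
left of some `1`, hence left of the rightmost `1`. Conversely, turning the rightmost `∗` of `T` into
`1` makes it the rightmost `1`, since every `1` of `T` lies left of some `∗`. The counts move by one
in opposite directions (`S'(1) = S(1) - 1`, one more `∗`), which carries the numerical conditions
across, and undoing a single `Function.update` restores the sequence.
-/

open Function

lemma card_filter_update_add {α β : Type*} [Fintype α] [DecidableEq α] [DecidableEq β]
    (f : α → β) (i : α) (x c : β) :
    (Finset.univ.filter fun j => update f i x j = c).card + (if f i = c then 1 else 0)
      = (Finset.univ.filter fun j => f j = c).card + (if x = c then 1 else 0) := by
  rw [Finset.card_filter, Finset.card_filter,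
    ← Finset.add_sum_erase _ _ (Finset.mem_univ i),
    ← Finset.add_sum_erase _ (fun j => if f j = c then 1 else 0) (Finset.mem_univ i),
    Finset.sum_congr rfl fun j hj => by rw [update_of_ne (Finset.mem_erase.mp hj).1],
    update_self]
  ring

section Counts

variable {n : ℕ} {S : FSeq n} {i : Fin n}

lemma count1_update_star_add_one (h : S i = Letter.one) :
    count1 (update S i Letter.star) + 1 = count1 S := by
  simpa [count1, countStar, h] using card_filter_update_add S i Letter.star Letter.one

lemma countStar_update_star (h : S i = Letter.one) :
    countStar (update S i Letter.star) = countStar S + 1 := by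
  simpa [count1, countStar, h] using card_filter_update_add S i Letter.star Letter.star

lemma count1_update_one (h : S i = Letter.star) :
    count1 (update S i Letter.one) = count1 S + 1 := by
  simpa [count1, countStar, h] using card_filter_update_add S i Letter.one Letter.one

lemma countStar_update_one_add_one (h : S i = Letter.star) :
    countStar (update S i Letter.one) + 1 = countStar S := by
  simpa [count1, countStar, h] using card_filter_update_add S i Letter.one Letter.star

lemma hasStar_iff_one_le_countStar : hasStar S ↔ 1 ≤ countStar S := by
  simp [hasStar, countStar, Nat.one_le_iff_ne_zero, Finset.filter_eq_empty_iff]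

lemma faceSeq_iff_of_hasStar {k : ℕ} (hS : hasStar S) :
    FaceSeq k S ↔ count1 S + 1 ≤ k ∧ k + 1 ≤ count1 S + countStar S := by
  have := hasStar_iff_one_le_countStar.mp hS
  unfold FaceSeq
  constructor
  · rintro (⟨h0, _⟩ | h)
    · omega
    · exact h
  · exact Or.inr

end Counts

section Positions

variable {n : ℕ} {S : FSeq n} {i : Fin n}

lemma isRightmostStar_update_star (hS : OneRight S) (hi : IsRightmostOne S i) :
    IsRightmostStar (update S i Letter.star) i := by
  obtain ⟨-, p, hp, hpR⟩ := hS
  have hpi : p ≤ i := not_lt.mp fun h => hi.2 p h hp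
  refine ⟨update_self .., fun j hj => ?_⟩
  rw [update_of_ne hj.ne']
  exact hpR j (hpi.trans_lt hj)

lemma noOneRight_update_star (hi : IsRightmostOne S i) :
    NoOneRight (update S i Letter.star) := by
  refine ⟨⟨i, update_self ..⟩, fun q hq => ⟨i, ?_, update_self ..⟩⟩
  have hqi : q ≠ i := by rintro rfl; simp at hq
  rw [update_of_ne hqi] at hq
  exact lt_of_le_of_ne (not_lt.mp fun h => hi.2 q h hq) hqi

lemma isRightmostOne_update_one (hS : NoOneRight S) (hi : IsRightmostStar S i) :
    IsRightmostOne (update S i Letter.one) i := by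
  refine ⟨update_self .., fun j hj hj1 => ?_⟩
  rw [update_of_ne hj.ne'] at hj1
  obtain ⟨l, hjl, hl⟩ := hS.2 j hj1
  exact hi.2 l (hj.trans hjl) hl

lemma oneRight_update_one (hi : IsRightmostStar S i) (hS : hasStar (update S i Letter.one)) :
    OneRight (update S i Letter.one) := by
  refine ⟨hS, i, update_self .., fun j hj => ?_⟩
  rw [update_of_ne hj.ne']
  exact hi.2 j hj

end Positions

section Rules

variable {n k m0 m1 : ℕ} {S S' : FSeq n}

lemma Cond1a.apply1_inverse (hS : FaceSeq k S) (h1 : Cond1a k m0 m1 S) (hS' : Apply1 S S') :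
    FaceSeq k S' ∧ Cond2a k m0 m1 S' ∧ Apply2 S' S := by
  obtain ⟨hk, hOR, hm1⟩ := h1
  obtain ⟨i, hi, rfl⟩ := hS'
  have hc1 := count1_update_star_add_one hi.1
  have hcs := countStar_update_star hi.1
  have hface := (faceSeq_iff_of_hasStar hOR.1).mp hS
  have hstar : hasStar (update S i Letter.star) := ⟨i, update_self ..⟩
  refine ⟨(faceSeq_iff_of_hasStar hstar).mpr ⟨by omega, by omega⟩,
    ⟨by omega, noOneRight_update_star hi, by omega⟩,
    i, isRightmostStar_update_star hOR hi, by rw [update_idem, ← hi.1, update_eq_self]⟩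

lemma Cond2a.apply2_inverse (hS : FaceSeq k S) (h2 : Cond2a k m0 m1 S) (hS' : Apply2 S S') :
    FaceSeq k S' ∧ Cond1a k m0 m1 S' ∧ Apply1 S' S := by
  obtain ⟨hk, hNOR, hm1⟩ := h2
  obtain ⟨i, hi, rfl⟩ := hS'
  have hc1 := count1_update_one hi.1
  have hcs := countStar_update_one_add_one hi.1
  have hface := (faceSeq_iff_of_hasStar hNOR.1).mp hS
  have hstar : hasStar (update S i Letter.one) := hasStar_iff_one_le_countStar.mpr (by omega)
  refine ⟨(faceSeq_iff_of_hasStar hstar).mpr ⟨by omega, by omega⟩,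
    ⟨by omega, oneRight_update_one hi hstar, by omega⟩,
    i, isRightmostOne_update_one hNOR hi, by rw [update_idem, ← hi.1, update_eq_self]⟩

end Rules

theorem rule1a_rule2a_inverse_general (n k m0 m1 : ℕ) :
    (∀ S S' : FSeq n, FaceSeq k S → Cond1a k m0 m1 S → Apply1 S S' →
      FaceSeq k S' ∧ Cond2a k m0 m1 S' ∧ Apply2 S' S) ∧
    (∀ T T' : FSeq n, FaceSeq k T → Cond2a k m0 m1 T → Apply2 T T' →
      FaceSeq k T' ∧ Cond1a k m0 m1 T' ∧ Apply1 T' T) :=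
  ⟨fun _ _ => Cond1a.apply1_inverse, fun _ _ => Cond2a.apply2_inverse⟩

/-- **Rules (1)(a) and (2)(a) are inverses of each other.** -/
theorem rule1a_rule2a_inverse (n k m0 m1 : ℕ) (hk1 : 1 ≤ k) (hk2 : k ≤ n - 1)
    (hm0 : m0 + k + 1 ≤ n) (hm1l : 1 ≤ m1) (hm1u : m1 + 1 ≤ k) :
    (∀ S S' : FSeq n, FaceSeq k S → Cond1a k m0 m1 S → Apply1 S S' →
      FaceSeq k S' ∧ Cond2a k m0 m1 S' ∧ Apply2 S' S) ∧
    (∀ T T' : FSeq n, FaceSeq k T → Cond2a k m0 m1 T → Apply2 T T' →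
      FaceSeq k T' ∧ Cond1a k m0 m1 T' ∧ Apply1 T' T) :=
  rule1a_rule2a_inverse_general n k m0 m1
end
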